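/- arXiv:2212.03142 — 2 statements merged into one kernel-verified Lean document; each statement's English description precedes it below -/
import Mathlib

section
/- Let w = a + ib be a complex number with a, b real and |ab| ≥ 1. Then the set of irreducible λ-quiddities over ⟨w⟩ is exactly {(0, kw, 0, −kw) : k ∈ ℤ} ∪ {(kw, 0, −kw, 0) : k ∈ ℤ}. -/
open Matrix Polynomial

noncomputable section

/-- The elementary matrix [[a, -1], [1, 0]]. -/
def matE (a : ℂ) : Matrix (Fin 2) (Fin 2) ℂ := !![a, -1; 1, 0]

/-- M_n(a_1, …, a_n) = matE a_n * matE a_{n-1} * ⋯ * matE a_1, for the list [a_1, …, a_n]. -/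
def Mlist (l : List ℂ) : Matrix (Fin 2) (Fin 2) ℂ := (l.reverse.map matE).prod

/-- A λ-quiddity over R : a nonempty tuple of elements of R with M_n(a_1,…,a_n) = ±Id. -/
def IsQuiddity (R : Set ℂ) (l : List ℂ) : Prop :=
  l ≠ [] ∧ (∀ x ∈ l, x ∈ R) ∧ (Mlist l = 1 ∨ Mlist l = -1)

/-- (a_1,…,a_n) ⊕ (b_1,…,b_m) := (a_1+b_m, a_2,…,a_{n-1}, a_n+b_1, b_2,…,b_{m-1}). -/
def oplus (a b : List ℂ) : List ℂ :=
  (a.headI + b.getLastD 0) ::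
    (a.tail.dropLast ++ (a.getLastD 0 + b.headI) :: b.tail.dropLast)

/-- b is obtained from a by a cyclic permutation of a or of the reversal of a. -/
def CyclicEquiv (a b : List ℂ) : Prop :=
  (∃ k, b = a.rotate k) ∨ (∃ k, b = a.reverse.rotate k)

/-- A λ-quiddity c over R is reducible if c ∼ (a_1,…,a_m) ⊕ (b_1,…,b_l) with
(a_1,…,a_m) a tuple of elements of R, (b_1,…,b_l) a λ-quiddity over R, m ≥ 3 and l ≥ 3. -/
def ReducibleQuiddity (R : Set ℂ) (c : List ℂ) : Prop :=
  ∃ a b : List ℂ, (∀ x ∈ a, x ∈ R) ∧ IsQuiddity R b ∧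
    3 ≤ a.length ∧ 3 ≤ b.length ∧ CyclicEquiv c (oplus a b)

/-- The irreducible λ-quiddities over R : the λ-quiddities of size ≥ 3 which are not
reducible (those of size < 3, i.e. (0,0), are by convention not irreducible). -/
def IrreducibleQuiddity (R : Set ℂ) (c : List ℂ) : Prop :=
  IsQuiddity R c ∧ 3 ≤ c.length ∧ ¬ ReducibleQuiddity R c

/-- The subgroup ⟨w⟩ = {kw : k ∈ ℤ} of (ℂ, +), as a set. -/
def subgroupGen (w : ℂ) : Set ℂ := {x | ∃ k : ℤ, x = (k : ℂ) * w}

end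

/-!
Choose `ζ = 1 ± i`, the sign making `|Re (ζ w)| = |a| + |b| ≥ 2 √|ab| ≥ 2`. The ratio `r = p / q`
of the first column `(p, q)` of `M_j` evolves by `r ↦ a_{j+1} - 1 / r`, and since `ζ² = ±2i`,
`Re (ζ / r) = ±2 Im (ζ r) / |ζ r|²` has absolute value at most `1` once `|Re (ζ r)| ≥ 1`. So if no
entry vanishes, `|Re (ζ r)| ≥ 1` all along, the lower-left entry of `M_n` is nonzero and
`M_n ≠ ±Id`: every λ-quiddity over `⟨w⟩` has a zero entry. For `n ≥ 5` a zero entry splits off the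
λ-quiddity `(0, u, 0, -u)`; for `n = 3, 4` the matrix equations together with the zero entry leave
only `(0, u, 0, -u)` and its rotation.
-/

section ZeroEntry

open Complex

lemma abs_re_I_div_le_half {v : ℂ} (hv : 1 ≤ |v.re|) : |(I / v).re| ≤ 1 / 2 := by
  have hv0 : 0 < normSq v := normSq_pos.2 fun h => by simp [h] at hv; linarith
  have hre : 1 ≤ v.re * v.re := by nlinarith [abs_mul_abs_self v.re, abs_nonneg v.re]
  rw [div_re, I_re, I_im, zero_mul, zero_div, zero_add, one_mul, abs_div, abs_of_pos hv0,
    div_le_iff₀ hv0, normSq_apply]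
  nlinarith [abs_mul_abs_self v.im, sq_nonneg (|v.im| - 1)]

lemma one_le_abs_re_mul_sub_inv {ζ x r : ℂ} {τ : ℝ} (hζ : ζ ^ 2 = τ * I) (hτ : |τ| ≤ 2)
    (hx : 2 ≤ |(ζ * x).re|) (hr : 1 ≤ |(ζ * r).re|) : 1 ≤ |(ζ * (x - r⁻¹)).re| := by
  have hζr : ζ * r ≠ 0 := fun h => by simp [h] at hr; linarith
  have hinv : ζ * r⁻¹ = τ * (I / (ζ * r)) := by
    rw [mul_div_assoc', eq_div_iff hζr, ← hζ]
    field_simp [right_ne_zero_of_mul hζr]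
  have hsmall : |(ζ * r⁻¹).re| ≤ 1 := by
    rw [hinv, re_ofReal_mul, abs_mul]
    nlinarith [abs_re_I_div_le_half hr, abs_nonneg τ, abs_nonneg (I / (ζ * r)).re]
  rw [mul_sub, sub_re]
  linarith [abs_sub_abs_le_abs_sub (ζ * x).re (ζ * r⁻¹).re]

lemma Mlist_append_singleton (l : List ℂ) (x : ℂ) : Mlist (l ++ [x]) = matE x * Mlist l := by
  simp [Mlist]

/-- Since `z / 0 = 0`, this also says that the lower-left entry of `Mlist l` does not vanish. -/
lemma one_le_abs_re_mul_Mlist_div {ζ : ℂ} {τ : ℝ} (hζ : ζ ^ 2 = τ * I) (hτ : |τ| ≤ 2)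
    {l : List ℂ} (hl : l ≠ []) (hx : ∀ x ∈ l, 2 ≤ |(ζ * x).re|) :
    1 ≤ |(ζ * (Mlist l 0 0 / Mlist l 1 0)).re| := by
  induction l using List.reverseRecOn with
  | nil => exact absurd rfl hl
  | append_singleton l x ih =>
    have hxl : 2 ≤ |(ζ * x).re| := hx x (by simp)
    rcases eq_or_ne l [] with rfl | hl'
    · simpa [Mlist, matE] using hxl.trans' one_le_two
    have hr := ih hl' fun y hy => hx y (by simp [hy])
    set P := Mlist l
    have hP10 : P 1 0 ≠ 0 := fun h => by simp [h] at hr; linarith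
    have hP00 : P 0 0 ≠ 0 := fun h => by simp [h] at hr; linarith
    have hstep : (x * P 0 0 - P 1 0) / P 0 0 = x - (P 0 0 / P 1 0)⁻¹ := by
      field_simp
    have h00 : Mlist (l ++ [x]) 0 0 = x * P 0 0 - P 1 0 := by
      simp [Mlist_append_singleton, matE, Matrix.mul_apply, Fin.sum_univ_two, P, sub_eq_add_neg]
    have h10 : Mlist (l ++ [x]) 1 0 = P 0 0 := by
      simp [Mlist_append_singleton, matE, Matrix.mul_apply, Fin.sum_univ_two, P]
    rw [h00, h10, hstep]
    exact one_le_abs_re_mul_sub_inv hζ hτ hxl hr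

lemma zero_mem_of_isQuiddity {R : Set ℂ} {ζ : ℂ} {τ : ℝ} (hζ : ζ ^ 2 = τ * I) (hτ : |τ| ≤ 2)
    (hR : ∀ x ∈ R, x ≠ 0 → 2 ≤ |(ζ * x).re|) {l : List ℂ} (hl : IsQuiddity R l) :
    (0 : ℂ) ∈ l := by
  obtain ⟨hne, hmem, hpm⟩ := hl
  by_contra h0
  have := one_le_abs_re_mul_Mlist_div hζ hτ hne fun x hx =>
    hR x (hmem x hx) fun h => h0 (h ▸ hx)
  rcases hpm with h | h <;> simp [h] at this <;> linarith

lemma exists_sq_eq_and_two_le_abs_re_mul {a b : ℝ} (hab : 1 ≤ |a * b|) :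
    ∃ (ζ : ℂ) (τ : ℝ), ζ ^ 2 = τ * I ∧ |τ| ≤ 2 ∧ 2 ≤ |(ζ * (a + b * I)).re| := by
  rcases le_total 0 (a * b) with h | h
  · refine ⟨1 - I, -2, by ring_nf; rw [I_sq]; push_cast; ring, by norm_num, ?_⟩
    rw [abs_of_nonneg h] at hab
    simp only [mul_re, sub_re, one_re, I_re, sub_im, one_im, I_im, add_re, ofReal_re,
      mul_im, ofReal_im, add_im]
    apply le_abs.2
    rcases le_total 0 (a + b) with h' | h'
    · left; nlinarith [sq_nonneg (a - b)]
    · right; nlinarith [sq_nonneg (a - b)]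
  · refine ⟨1 + I, 2, by ring_nf; rw [I_sq]; push_cast; ring, by norm_num, ?_⟩
    rw [abs_of_nonpos h] at hab
    simp only [mul_re, add_re, one_re, I_re, add_im, one_im, I_im, ofReal_re,
      mul_im, ofReal_im]
    apply le_abs.2
    rcases le_total 0 (a - b) with h' | h'
    · left; nlinarith [sq_nonneg (a + b)]
    · right; nlinarith [sq_nonneg (a + b)]

lemma zero_mem_of_isQuiddity_subgroupGen {a b : ℝ} (hab : 1 ≤ |a * b|) {w : ℂ}
    (hw : w = a + b * I) {l : List ℂ} (hl : IsQuiddity (subgroupGen w) l) : (0 : ℂ) ∈ l := by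
  obtain ⟨ζ, τ, hζ, hτ, hw2⟩ := exists_sq_eq_and_two_le_abs_re_mul hab
  refine zero_mem_of_isQuiddity hζ hτ ?_ hl
  rintro _ ⟨k, rfl⟩ hx0
  have hk : k ≠ 0 := by rintro rfl; simp at hx0
  have hk1 : (1 : ℝ) ≤ |(k : ℝ)| := by exact_mod_cast Int.one_le_abs hk
  rw [mul_left_comm, ← ofReal_intCast, re_ofReal_mul, abs_mul, hw]
  nlinarith [abs_nonneg (ζ * (a + b * I)).re]

end ZeroEntry

lemma Mlist_three (x y z : ℂ) :
    Mlist [x, y, z] = !![z * (y * x - 1) - x, 1 - z * y; y * x - 1, -y] := by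
  ext i j
  fin_cases i <;> fin_cases j <;>
    simp [Mlist, matE, Matrix.mul_apply, Fin.sum_univ_two] <;> ring

lemma Mlist_four (x y z t : ℂ) :
    Mlist [x, y, z, t] =
      !![t * (z * (y * x - 1) - x) - (y * x - 1), t * (1 - z * y) + y;
        z * (y * x - 1) - x, 1 - z * y] := by
  rw [show [x, y, z, t] = [x, y, z] ++ [t] from rfl, Mlist_append_singleton, Mlist_three, matE,
    Matrix.mul_fin_two]
  ring_nf

lemma zero_notMem_of_Mlist_three {x y z : ℂ} (h : Mlist [x, y, z] = 1 ∨ Mlist [x, y, z] = -1) :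
    (0 : ℂ) ∉ [x, y, z] := by
  have hyx : y * x = 1 := by
    have := congr_fun₂ (Mlist_three x y z) 1 0
    rcases h with h | h <;> simp [h] at this <;> linear_combination -this
  have hzy : z * y = 1 := by
    have := congr_fun₂ (Mlist_three x y z) 0 1
    rcases h with h | h <;> simp [h] at this <;> linear_combination this
  simp only [List.mem_cons, List.not_mem_nil, or_false, not_or]
  exact ⟨(right_ne_zero_of_mul_eq_one hyx).symm, (left_ne_zero_of_mul_eq_one hyx).symm,
    (left_ne_zero_of_mul_eq_one hzy).symm⟩

lemma eq_neg_of_Mlist_four {x y z t : ℂ}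
    (h : Mlist [x, y, z, t] = 1 ∨ Mlist [x, y, z, t] = -1) (h0 : (0 : ℂ) ∈ [x, y, z, t]) :
    z = -x ∧ t = -y ∧ (x = 0 ∨ y = 0) := by
  have e := Mlist_four x y z t
  have e00 := congr_fun₂ e 0 0
  have e01 := congr_fun₂ e 0 1
  have e10 := congr_fun₂ e 1 0
  have e11 := congr_fun₂ e 1 1
  rcases h with h | h <;> simp [h] at e00 e01 e10 e11
  · have hzy : z * y = 0 := by linear_combination e11
    have hyx : y * x = 0 := by linear_combination e00 - t * e10
    refine ⟨by linear_combination e10 + z * hyx, by linear_combination -e01 + t * hzy, ?_⟩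
    exact (mul_eq_zero.1 hyx).symm
  · exfalso
    have hzy : z * y = 2 := by linear_combination e11
    have hyx : y * x = 2 := by linear_combination e00 - t * e10
    have hty : t = y := by linear_combination e01 - t * hzy
    subst hty
    simp only [List.mem_cons, List.not_mem_nil, or_false] at h0
    rcases h0 with rfl | rfl | rfl | rfl <;> simp at hyx hzy

lemma oplus_zero_neg (h l u : ℂ) (m : List ℂ) :
    oplus ((h + u) :: (m ++ [l])) [0, u, 0, -u] = h :: (m ++ [l, u, 0]) := by
  simp [oplus, List.getLastD_eq_getLast?, List.getLast?_cons]

lemma length_oplus {a b : List ℂ} (ha : 2 ≤ a.length) (hb : 2 ≤ b.length) :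
    (oplus a b).length = a.length + b.length - 2 := by
  simp only [oplus, List.length_cons, List.length_append, List.length_dropLast, List.length_tail]
  omega

lemma CyclicEquiv.length_eq {c d : List ℂ} (h : CyclicEquiv c d) : d.length = c.length := by
  rcases h with ⟨k, rfl⟩ | ⟨k, rfl⟩ <;> simp

lemma exists_eq_cons_append_pair {e : List ℂ} (he : 3 ≤ e.length) :
    ∃ h m l u, e = h :: (m ++ [l, u]) := by
  obtain _ | ⟨h, e⟩ := e
  · simp at he
  obtain rfl | ⟨e, u, rfl⟩ := e.eq_nil_or_concat'
  · simp at he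
  obtain rfl | ⟨m, l, rfl⟩ := e.eq_nil_or_concat'
  · simp at he
  exact ⟨h, m, l, u, by simp⟩

lemma isQuiddity_zero_neg {G : AddSubgroup ℂ} {u : ℂ} (hu : u ∈ G) :
    IsQuiddity G [0, u, 0, -u] := by
  refine ⟨by simp, ?_, Or.inl ?_⟩
  · simp [hu, G.zero_mem, G.neg_mem hu]
  · rw [Mlist_four, Matrix.one_fin_two]; ring_nf

lemma isQuiddity_neg_zero {G : AddSubgroup ℂ} {u : ℂ} (hu : u ∈ G) :
    IsQuiddity G [u, 0, -u, 0] := by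
  refine ⟨by simp, ?_, Or.inl ?_⟩
  · simp [hu, G.zero_mem, G.neg_mem hu]
  · rw [Mlist_four, Matrix.one_fin_two]; ring_nf

/-- A zero entry `c_i = 0` splits off the λ-quiddity `(0, c_{i-1}, 0, -c_{i-1})`. -/
lemma reducibleQuiddity_of_zero_mem {G : AddSubgroup ℂ} {c : List ℂ} (hc : ∀ x ∈ c, x ∈ G)
    (h0 : (0 : ℂ) ∈ c) (hlen : 5 ≤ c.length) : ReducibleQuiddity G c := by
  obtain ⟨s, t, rfl⟩ := List.append_of_mem h0
  have hrot := List.rotate_append_length_eq (s ++ [0]) t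
  simp only [List.append_assoc, List.singleton_append] at hrot
  obtain ⟨h, m, l, u, hts⟩ := exists_eq_cons_append_pair (e := t ++ s) (by simp at hlen ⊢; omega)
  have hG : ∀ x ∈ h :: (m ++ [l, u]), x ∈ G := fun x hx =>
    hc x (by rw [← hts] at hx; simp at hx ⊢; tauto)
  have hm : 1 ≤ m.length := by
    have := congr_arg List.length hts
    simp at this hlen
    omega
  refine ⟨(h + u) :: (m ++ [l]), [0, u, 0, -u], ?_, isQuiddity_zero_neg (hG u (by simp)), ?_,
    by simp, Or.inl ⟨(s ++ [0]).length, ?_⟩⟩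
  · simp only [List.mem_cons, List.mem_append, List.not_mem_nil, or_false]
    rintro x (rfl | hx | rfl)
    · exact G.add_mem (hG h (by simp)) (hG u (by simp))
    · exact hG x (by simp [hx])
    · exact hG x (by simp)
  · simp; omega
  · rw [oplus_zero_neg, hrot, ← List.append_assoc, hts]; simp

lemma not_reducibleQuiddity_of_length_eq_four {R : Set ℂ}
    (hR : ∀ l, IsQuiddity R l → (0 : ℂ) ∈ l) {c : List ℂ} (hc : c.length = 4) :
    ¬ ReducibleQuiddity R c := by
  rintro ⟨a, b, -, hb, ha, hb3, hcyc⟩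
  have hlen := hcyc.length_eq
  rw [length_oplus (by omega) (by omega)] at hlen
  obtain ⟨x, y, z, rfl⟩ := List.length_eq_three.1 (show b.length = 3 by omega)
  exact zero_notMem_of_Mlist_three hb.2.2 (hR _ hb)

lemma subgroupGen_eq_zmultiples (w : ℂ) : subgroupGen w = AddSubgroup.zmultiples w := by
  ext x
  simp [subgroupGen, AddSubgroup.mem_zmultiples_iff, eq_comm]

theorem stmt2 (a b : ℝ) (hab : 1 ≤ |a * b|)
    (w : ℂ) (hw : w = (a : ℂ) + (b : ℂ) * Complex.I) :
    {c : List ℂ | IrreducibleQuiddity (subgroupGen w) c} =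
      {c : List ℂ | ∃ k : ℤ, c = [0, (k : ℂ) * w, 0, -((k : ℂ) * w)]} ∪
      {c : List ℂ | ∃ k : ℤ, c = [(k : ℂ) * w, 0, -((k : ℂ) * w), 0]} := by
  have hR : ∀ l, IsQuiddity (subgroupGen w) l → (0 : ℂ) ∈ l := fun _ =>
    zero_mem_of_isQuiddity_subgroupGen hab hw
  ext c
  simp only [Set.mem_ofPred_eq, Set.mem_union]
  constructor
  · rintro ⟨hq, hlen, hirr⟩
    obtain h3 | h4 | h5 : c.length = 3 ∨ c.length = 4 ∨ 5 ≤ c.length := by omega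
    · obtain ⟨x, y, z, rfl⟩ := List.length_eq_three.1 h3
      exact absurd (hR _ hq) (zero_notMem_of_Mlist_three hq.2.2)
    · obtain ⟨x, y, z, t, rfl⟩ := List.length_eq_four.1 h4
      obtain ⟨rfl, rfl, rfl | rfl⟩ := eq_neg_of_Mlist_four hq.2.2 (hR _ hq)
      · obtain ⟨k, rfl⟩ := hq.2.1 y (by simp)
        exact Or.inl ⟨k, by simp⟩
      · obtain ⟨k, rfl⟩ := hq.2.1 x (by simp)
        exact Or.inr ⟨k, by simp⟩
    · have h0 := hR _ hq
      rw [subgroupGen_eq_zmultiples] at hq hirr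
      exact absurd (reducibleQuiddity_of_zero_mem hq.2.1 h0 h5) hirr
  · have hk (k : ℤ) : (k : ℂ) * w ∈ AddSubgroup.zmultiples w := ⟨k, by simp⟩
    rintro (⟨k, rfl⟩ | ⟨k, rfl⟩)
    · refine ⟨?_, by simp, not_reducibleQuiddity_of_length_eq_four hR rfl⟩
      rw [subgroupGen_eq_zmultiples]
      exact isQuiddity_zero_neg (hk k)
    · refine ⟨?_, by simp, not_reducibleQuiddity_of_length_eq_four hR rfl⟩
      rw [subgroupGen_eq_zmultiples]
      exact isQuiddity_neg_zero (hk k)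
end

section
/- Let w be any complex root of the polynomial X^5 + 10X^4 + 5X^3 + 5. Then the set of irreducible λ-quiddities over ⟨w⟩ is exactly {(0, kw, 0, −kw) : k ∈ ℤ} ∪ {(kw, 0, −kw, 0) : k ∈ ℤ}. -/
open Matrix Polynomial

/-!
Every λ-quiddity over `⟨w⟩` contains a zero. Indeed, the entries of `M_n(k₁w, …, kₙw)` are
rational polynomials in `w`, and `X⁵ + 10X⁴ + 5X³ + 5` is irreducible (Eisenstein at 5), so
`M_n = ±Id` persists when `w` is replaced by its real conjugate `x ∈ [-10, -9]`. There, if no `kᵢ`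
vanishes, every entry has modulus at least 9, the continuants grow, and `M_n ≠ ±Id`.

In an additive subgroup where every λ-quiddity contains a zero, the identity
`M(x, 0, y, r) = -M(x + y, r)` shows that there is no λ-quiddity of size 3, that those of size 4
are the rotations of `(x, 0, -x, 0)`, and that one of size `n ≥ 5`, rotated to
`(z, x, 0, y, r)`, equals `(0, x, 0, -x) ⊕ (x + y, r, z)`.
-/

lemma Mlist_append (s t : List ℂ) : Mlist (s ++ t) = Mlist t * Mlist s := by
  simp [Mlist]

lemma Mlist_cons (a : ℂ) (l : List ℂ) : Mlist (a :: l) = Mlist l * matE a := by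
  simp [Mlist]

lemma mul_eq_pmOne_comm {A B : Matrix (Fin 2) (Fin 2) ℂ} (h : A * B = 1 ∨ A * B = -1) :
    B * A = 1 ∨ B * A = -1 := by
  refine h.imp mul_eq_one_comm.mp fun h => ?_
  rw [← neg_eq_iff_eq_neg, ← Matrix.neg_mul, mul_eq_one_comm, Matrix.mul_neg, h, neg_neg]

lemma Mlist_rotate_eq_pmOne {l : List ℂ} (h : Mlist l = 1 ∨ Mlist l = -1) (n : ℕ) :
    Mlist (l.rotate n) = 1 ∨ Mlist (l.rotate n) = -1 := by
  rw [← List.take_append_drop (n % l.length) l, Mlist_append] at h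
  rw [List.rotate_eq_drop_append_take_mod, Mlist_append]
  exact mul_eq_pmOne_comm h

lemma Mlist_cons_zero_cons (x y : ℂ) (r : List ℂ) :
    Mlist (x :: 0 :: y :: r) = -Mlist ((x + y) :: r) := by
  have h : matE y * (matE 0 * matE x) = -matE (x + y) := by
    ext i j; fin_cases i <;> fin_cases j <;> simp [matE]
  simp only [Mlist_cons, mul_assoc, h, Matrix.mul_neg]

lemma List.exists_rotate_eq_append_cons {α : Type*} {a : α} {l : List α} (ha : a ∈ l) {m : ℕ}
    (hm : m < l.length) : ∃ j s t, l.rotate j = s ++ a :: t ∧ s.length = m := by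
  obtain ⟨s₀, t₀, rfl⟩ := List.append_of_mem ha
  set u := t₀ ++ s₀
  have hu : m ≤ u.length := by simp [u] at hm ⊢; omega
  refine ⟨s₀.length + (a :: u.take (u.length - m)).length, u.drop (u.length - m),
    u.take (u.length - m), ?_, by simp; omega⟩
  conv_lhs => rw [← List.rotate_rotate, List.rotate_append_length_eq, List.cons_append,
    ← List.take_append_drop (u.length - m) (t₀ ++ s₀), ← List.cons_append]
  exact List.rotate_append_length_eq _ _

lemma IsQuiddity.rotate {R : Set ℂ} {c : List ℂ} (hc : IsQuiddity R c) (n : ℕ) :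
    IsQuiddity R (c.rotate n) :=
  ⟨by simpa using hc.1, fun x hx => hc.2.1 x (List.mem_rotate.mp hx),
    Mlist_rotate_eq_pmOne hc.2.2 n⟩

lemma Mlist_cons_zero_singleton_ne_pmOne (x y : ℂ) :
    ¬ (Mlist [x, 0, y] = 1 ∨ Mlist [x, 0, y] = -1) := by
  rw [Mlist_cons_zero_cons]
  rintro (h | h) <;> simpa [Mlist, matE] using congrFun₂ h 1 0

lemma eq_neg_and_eq_zero_of_Mlist_eq_pmOne {x y z : ℂ}
    (h : Mlist [x, 0, y, z] = 1 ∨ Mlist [x, 0, y, z] = -1) : y = -x ∧ z = 0 := by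
  rw [Mlist_cons_zero_cons] at h
  rcases h with h | h
  · have h₁ := congrFun₂ h 1 0
    have h₂ := congrFun₂ h 0 1
    simp [Mlist, matE] at h₁ h₂
    exact ⟨by linear_combination -h₁, h₂⟩
  · have h₁ := congrFun₂ h 1 1
    norm_num [Mlist, matE] at h₁

lemma CyclicEquiv.length_eq_s9 {a b : List ℂ} (h : CyclicEquiv a b) : b.length = a.length := by
  rcases h with ⟨k, rfl⟩ | ⟨k, rfl⟩ <;> simp

lemma oplus_alternating (x y z : ℂ) (r : List ℂ) :
    oplus [0, x, 0, -x] ((x + y) :: r ++ [z]) = z :: x :: 0 :: y :: r := by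
  simp [oplus, List.getLast?_cons]

def IsAlternatingQuad (R : Set ℂ) (c : List ℂ) : Prop :=
  ∃ x ∈ R, c = [0, x, 0, -x] ∨ c = [x, 0, -x, 0]

section AddSubgroup

variable {R : AddSubgroup ℂ}

lemma IsAlternatingQuad.rotate {c : List ℂ} (hc : IsAlternatingQuad R c) (n : ℕ) :
    IsAlternatingQuad R (c.rotate n) := by
  induction n with
  | zero => simpa using hc
  | succ n ih =>
    obtain ⟨x, hx, h | h⟩ := ih <;> rw [← List.rotate_rotate, h]
    · exact ⟨x, hx, Or.inr (by simp)⟩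
    · exact ⟨-x, R.neg_mem hx, Or.inl (by simp)⟩

lemma IsAlternatingQuad.isQuiddity {c : List ℂ} (hc : IsAlternatingQuad R c) :
    IsQuiddity R c := by
  obtain ⟨x, hx : x ∈ R, rfl | rfl⟩ := hc <;>
  · refine ⟨by simp, by simp [R.zero_mem, hx, R.neg_mem hx], Or.inl ?_⟩
    ext i j; fin_cases i <;> fin_cases j <;> simp [Mlist, matE]

lemma IsQuiddity.length_ne_three {c : List ℂ} (hc : IsQuiddity R c)
    (hR : ∀ c, IsQuiddity R c → (0 : ℂ) ∈ c) : c.length ≠ 3 := by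
  intro h3
  obtain ⟨j, s, t, hj, hs⟩ := List.exists_rotate_eq_append_cons (hR c hc) (m := 1) (by omega)
  have ht : t.length = 1 := by
    have := congrArg List.length hj
    simp [hs, h3] at this; omega
  obtain ⟨x, rfl⟩ := List.length_eq_one_iff.mp hs
  obtain ⟨y, rfl⟩ := List.length_eq_one_iff.mp ht
  have hpm := (hc.rotate j).2.2
  rw [hj] at hpm
  exact Mlist_cons_zero_singleton_ne_pmOne x y hpm

lemma IsQuiddity.isAlternatingQuad_of_length_eq_four {c : List ℂ} (hc : IsQuiddity R c)
    (hR : ∀ c, IsQuiddity R c → (0 : ℂ) ∈ c) (h4 : c.length = 4) : IsAlternatingQuad R c := by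
  obtain ⟨j, s, t, hj, hs⟩ := List.exists_rotate_eq_append_cons (hR c hc) (m := 1) (by omega)
  have ht : t.length = 2 := by
    have := congrArg List.length hj
    simp [hs, h4] at this; omega
  obtain ⟨x, rfl⟩ := List.length_eq_one_iff.mp hs
  obtain ⟨y, z, rfl⟩ := List.length_eq_two.mp ht
  have hcj := hc.rotate j
  rw [hj] at hcj
  obtain ⟨rfl, rfl⟩ := eq_neg_and_eq_zero_of_Mlist_eq_pmOne hcj.2.2
  rw [List.rotate_eq_iff] at hj
  rw [hj]
  exact IsAlternatingQuad.rotate ⟨x, hcj.2.1 x (by simp), Or.inr rfl⟩ _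

lemma IsQuiddity.reducibleQuiddity_of_five_le_length {c : List ℂ} (hc : IsQuiddity R c)
    (hR : ∀ c, IsQuiddity R c → (0 : ℂ) ∈ c) (h5 : 5 ≤ c.length) : ReducibleQuiddity R c := by
  obtain ⟨j, s, t, hj, hs⟩ := List.exists_rotate_eq_append_cons (hR c hc) (m := 2) (by omega)
  have ht : 2 ≤ t.length := by
    have := congrArg List.length hj
    simp [hs] at this; omega
  obtain ⟨z, x, rfl⟩ := List.length_eq_two.mp hs
  obtain _ | ⟨y, r⟩ := t
  · simp at ht
  have hcj := hc.rotate j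
  simp only [hj, List.cons_append, List.nil_append] at hcj
  obtain ⟨-, hmem, hpm⟩ := hcj
  have hx : x ∈ R := hmem x (by simp)
  refine ⟨[0, x, 0, -x], (x + y) :: r ++ [z], ?_, ⟨by simp, ?_, ?_⟩, by simp, ?_,
    Or.inl ⟨j, by rw [hj, oplus_alternating]; rfl⟩⟩
  · simp [R.zero_mem, hx, R.neg_mem hx]
  · simp only [List.cons_append, List.mem_cons, List.mem_append,
      List.not_mem_nil, or_false]
    rintro e (rfl | he | rfl)
    · exact R.add_mem hx (hmem y (by simp))
    · exact hmem e (by simp [he])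
    · exact hmem e (by simp)
  · rw [Mlist_cons, Mlist_cons_zero_cons, Matrix.neg_mul, neg_eq_iff_eq_neg, neg_eq_iff_eq_neg,
      neg_neg, or_comm] at hpm
    rw [Mlist_append]
    simpa [Mlist] using mul_eq_pmOne_comm hpm
  · simp at ht ⊢; omega

lemma IsAlternatingQuad.irreducibleQuiddity {c : List ℂ} (hc : IsAlternatingQuad R c)
    (hR : ∀ c, IsQuiddity R c → (0 : ℂ) ∈ c) : IrreducibleQuiddity R c := by
  have h4 : c.length = 4 := by obtain ⟨x, -, rfl | rfl⟩ := hc <;> rfl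
  refine ⟨hc.isQuiddity, by omega, fun ⟨a, b, _, hb, ha3, hb3, hcyc⟩ => ?_⟩
  have := hcyc.length_eq_s9
  rw [length_oplus (by omega) (by omega)] at this
  exact hb.length_ne_three hR (by omega)

theorem irreducibleQuiddity_iff_isAlternatingQuad (hR : ∀ c, IsQuiddity R c → (0 : ℂ) ∈ c)
    {c : List ℂ} : IrreducibleQuiddity R c ↔ IsAlternatingQuad R c := by
  refine ⟨fun ⟨hc, h3, hirr⟩ => ?_, fun hc => hc.irreducibleQuiddity hR⟩
  rcases lt_or_ge c.length 5 with h | h5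
  · obtain h | h : c.length = 3 ∨ c.length = 4 := by omega
    · exact absurd h (hc.length_ne_three hR)
    · exact hc.isAlternatingQuad_of_length_eq_four hR h
  · exact absurd (hc.reducibleQuiddity_of_five_le_length hR h5) hirr

end AddSubgroup

lemma IsConjRoot.aeval_eq_aeval_iff {K A : Type*} [Field K] [Ring A] [Algebra K A] {x y : A}
    (h : IsConjRoot K x y) (p q : K[X]) : aeval x p = aeval x q ↔ aeval y p = aeval y q := by
  rw [← sub_eq_zero, ← map_sub, ← minpoly.dvd_iff, h, minpoly.dvd_iff, map_sub, sub_eq_zero]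

lemma IsConjRoot.mapMatrix_aeval_eq_iff {K A n : Type*} [Field K] [Ring A] [Algebra K A]
    [Fintype n] [DecidableEq n] {x y : A} (h : IsConjRoot K x y) (P Q : Matrix n n K[X]) :
    (aeval x).mapMatrix P = (aeval x).mapMatrix Q ↔
      (aeval y).mapMatrix P = (aeval y).mapMatrix Q := by
  simp only [← Matrix.ext_iff, AlgHom.mapMatrix_apply, Matrix.map_apply, h.aeval_eq_aeval_iff]

noncomputable def polyMlist (κ : List ℤ) : Matrix (Fin 2) (Fin 2) ℚ[X] :=
  (κ.reverse.map fun k : ℤ => !![C (k : ℚ) * X, -1; 1, 0]).prod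

lemma mapMatrix_aeval_polyMlist (z : ℂ) (κ : List ℤ) :
    (aeval z).mapMatrix (polyMlist κ) = Mlist (κ.map fun k : ℤ => (k : ℂ) * z) := by
  simp only [polyMlist, Mlist, map_list_prod, List.map_reverse, List.map_map]
  congr 3
  funext k
  ext i j; fin_cases i <;> fin_cases j <;> simp [matE]

lemma IsConjRoot.Mlist_map_mul_eq_pmOne {z z' : ℂ} (h : IsConjRoot ℚ z z') {κ : List ℤ}
    (hκ : Mlist (κ.map fun k : ℤ => (k : ℂ) * z) = 1 ∨
      Mlist (κ.map fun k : ℤ => (k : ℂ) * z) = -1) :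
    Mlist (κ.map fun k : ℤ => (k : ℂ) * z') = 1 ∨ Mlist (κ.map fun k : ℤ => (k : ℂ) * z') = -1 := by
  simp only [← mapMatrix_aeval_polyMlist] at hκ ⊢
  rw [← map_one (aeval (R := ℚ) z).mapMatrix, ← map_neg] at hκ
  rw [← map_one (aeval (R := ℚ) z').mapMatrix, ← map_neg, ← h.mapMatrix_aeval_eq_iff,
    ← h.mapMatrix_aeval_eq_iff]
  exact hκ

lemma Mlist_cons_apply_zero_zero (a : ℂ) (l : List ℂ) :
    Mlist (a :: l) 0 0 = Mlist l 0 0 * a + Mlist l 0 1 := by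
  simp [Mlist_cons, Matrix.mul_apply, matE]

lemma Mlist_cons_apply_zero_one (a : ℂ) (l : List ℂ) : Mlist (a :: l) 0 1 = -Mlist l 0 0 := by
  simp [Mlist_cons, Matrix.mul_apply, matE]

lemma norm_Mlist_growth {l : List ℂ} (hl : ∀ a ∈ l, 3 ≤ ‖a‖) :
    1 ≤ ‖Mlist l 0 0‖ ∧ 2 * ‖Mlist l 0 1‖ ≤ ‖Mlist l 0 0‖ := by
  induction l with
  | nil => simp [Mlist]
  | cons a l ih =>
    obtain ⟨h1, h2⟩ := ih fun b hb => hl b (by simp [hb])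
    have ha : 3 ≤ ‖a‖ := hl a (by simp)
    have htri : ‖Mlist l 0 0‖ * ‖a‖ - ‖Mlist l 0 1‖ ≤ ‖Mlist (a :: l) 0 0‖ := by
      simpa [Mlist_cons_apply_zero_zero] using norm_sub_norm_le (Mlist l 0 0 * a) (-Mlist l 0 1)
    rw [Mlist_cons_apply_zero_one, norm_neg]
    constructor <;> nlinarith [norm_nonneg (Mlist l 0 0), norm_nonneg (Mlist l 0 1)]

lemma Mlist_ne_pmOne_of_three_le_norm {l : List ℂ} (hne : l ≠ []) (hl : ∀ a ∈ l, 3 ≤ ‖a‖) :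
    ¬ (Mlist l = 1 ∨ Mlist l = -1) := by
  obtain ⟨a, l, rfl⟩ := List.exists_cons_of_ne_nil hne
  have h00 : Mlist l 0 0 ≠ 0 := norm_pos_iff.mp <| by
    linarith [(norm_Mlist_growth (l := l) fun b hb => hl b (by simp [hb])).1]
  have h01 : Mlist (a :: l) 0 1 ≠ 0 := by simpa [Mlist_cons_apply_zero_one] using h00
  rintro (h | h) <;> simp [h] at h01

noncomputable def quintic : ℤ[X] := X ^ 5 + C 10 * X ^ 4 + C 5 * X ^ 3 + C 5

lemma monic_quintic : quintic.Monic := by unfold quintic; monicity!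

lemma irreducible_quintic : Irreducible quintic := by
  have hdeg : quintic.degree = 5 := by unfold quintic; compute_degree!
  refine irreducible_of_eisenstein_criterion (P := Ideal.span {5})
    ((Ideal.span_singleton_prime (by norm_num)).mpr (by norm_num)) ?_ ?_ (by rw [hdeg]; norm_num)
    ?_ monic_quintic.isPrimitive
  · rw [monic_quintic.leadingCoeff, Ideal.mem_span_singleton]; norm_num
  · intro n hn
    rw [hdeg] at hn
    have hn : n < 5 := by exact_mod_cast hn
    rw [Ideal.mem_span_singleton]
    interval_cases n <;> simp [quintic, coeff_X_pow]
  · rw [Ideal.span_singleton_pow, Ideal.mem_span_singleton]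
    simp [quintic, coeff_X_pow]

lemma isConjRoot_of_quintic {z z' : ℂ} (hz : z ^ 5 + 10 * z ^ 4 + 5 * z ^ 3 + 5 = 0)
    (hz' : z' ^ 5 + 10 * z' ^ 4 + 5 * z' ^ 3 + 5 = 0) : IsConjRoot ℚ z z' := by
  have hirr : Irreducible (quintic.map (Int.castRingHom ℚ)) :=
    (IsPrimitive.Int.irreducible_iff_irreducible_map_cast monic_quintic.isPrimitive).mp
      irreducible_quintic
  have hminpoly {u : ℂ} (hu : u ^ 5 + 10 * u ^ 4 + 5 * u ^ 3 + 5 = 0) :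
      quintic.map (Int.castRingHom ℚ) = minpoly ℚ u :=
    minpoly.eq_of_irreducible_of_monic hirr (by simpa [quintic, map_ofNat] using hu)
      (monic_quintic.map _)
  exact (hminpoly hz).symm.trans (hminpoly hz')

lemma exists_real_root_quintic :
    ∃ x : ℝ, x ≤ -9 ∧ (x : ℂ) ^ 5 + 10 * (x : ℂ) ^ 4 + 5 * (x : ℂ) ^ 3 + 5 = 0 := by
  obtain ⟨x, hx, hfx⟩ := intermediate_value_Icc (by norm_num : (-10 : ℝ) ≤ -9)
    (f := fun x : ℝ => x ^ 5 + 10 * x ^ 4 + 5 * x ^ 3 + 5) (by fun_prop)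
    (show (0 : ℝ) ∈ Set.Icc _ _ by norm_num)
  exact ⟨x, hx.2, by exact_mod_cast hfx⟩

lemma exists_eq_map_intCast_mul_of_forall_mem_zmultiples {w : ℂ} {l : List ℂ}
    (hl : ∀ x ∈ l, x ∈ AddSubgroup.zmultiples w) :
    ∃ κ : List ℤ, l = κ.map fun k : ℤ => (k : ℂ) * w := by
  induction l with
  | nil => exact ⟨[], rfl⟩
  | cons x l ih =>
    obtain ⟨k, rfl⟩ := AddSubgroup.mem_zmultiples_iff.mp (hl x (by simp))
    obtain ⟨κ, rfl⟩ := ih fun y hy => hl y (by simp [hy])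
    exact ⟨k :: κ, by simp [zsmul_eq_mul]⟩

lemma zero_mem_of_isQuiddity_zmultiples {w : ℂ} (hw : w ^ 5 + 10 * w ^ 4 + 5 * w ^ 3 + 5 = 0)
    {c : List ℂ} (hc : IsQuiddity (AddSubgroup.zmultiples w) c) : (0 : ℂ) ∈ c := by
  by_contra h0
  obtain ⟨κ, rfl⟩ := exists_eq_map_intCast_mul_of_forall_mem_zmultiples hc.2.1
  obtain ⟨x, hx9, hx⟩ := exists_real_root_quintic
  refine Mlist_ne_pmOne_of_three_le_norm (l := κ.map fun k : ℤ => (k : ℂ) * x)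
    (by simpa using hc.1) ?_ ((isConjRoot_of_quintic hw hx).Mlist_map_mul_eq_pmOne hc.2.2)
  simp only [List.mem_map, forall_exists_index, and_imp, forall_apply_eq_imp_iff₂]
  intro k hk
  have hk0 : k ≠ 0 := by rintro rfl; exact h0 (List.mem_map.mpr ⟨0, hk, by simp⟩)
  have hk1 : (1 : ℝ) ≤ |(k : ℝ)| := by exact_mod_cast Int.one_le_abs hk0
  rw [norm_mul, Complex.norm_intCast, Complex.norm_real, Real.norm_of_nonpos (by linarith)]
  nlinarith

theorem stmt9 (w : ℂ) (hw : w ^ 5 + 10 * w ^ 4 + 5 * w ^ 3 + 5 = 0) :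
    {c : List ℂ | IrreducibleQuiddity (subgroupGen w) c} =
      {c : List ℂ | ∃ k : ℤ, c = [0, (k : ℂ) * w, 0, -((k : ℂ) * w)]} ∪
      {c : List ℂ | ∃ k : ℤ, c = [(k : ℂ) * w, 0, -((k : ℂ) * w), 0]} := by
  ext c
  rw [Set.mem_ofPred_eq, subgroupGen_eq_zmultiples,
    irreducibleQuiddity_iff_isAlternatingQuad fun _ => zero_mem_of_isQuiddity_zmultiples hw]
  simp [IsAlternatingQuad, AddSubgroup.mem_zmultiples_iff, zsmul_eq_mul, exists_or]
end
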